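/- For all integers k, y, X, H ≥ 1, the set M_k(X, H; y) := {(x, t₁, t₂, …, t_k) : x, t₁, …, t_k integers, 1 ≤ x ≤ X, 1 ≤ t_i ≤ H for all i, and y | (x+t₁)(x+t₂)⋯(x+t_k)} has size at most H^k · τ_k(y) · (1 + X / rad_k(y)). -/

import Mathlib

/-!
If `y ∣ (x + t₁)⋯(x + t_k)`, then `y` factors as `d₁⋯d_k` with `dᵢ ∣ x + tᵢ`. For fixed `t` and
fixed factorization `d`, the admissible `x` lie in a single residue class modulo
`lcm(d₁, …, d_k) ≥ rad_k(y)`, so there are at most `1 + X / rad_k(y)` of them in `[1, X]`.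
Summing over the `H^k` choices of `t` and the `τ_k(y)` factorizations of `y` gives the bound.
-/

/-- `τ_k(n)`: the number of `k`-tuples of positive integers with product `n`. -/
noncomputable def tauNat (k n : ℕ) : ℕ :=
  Nat.card {d : Fin k → ℕ // (∀ i, 0 < d i) ∧ ∏ i, d i = n}

/-- `rad_k(n)`: the minimum of `lcm(n₁,…,n_k)` over factorizations `n = n₁⋯n_k`
into positive integers. -/
noncomputable def radk (k n : ℕ) : ℕ :=
  sInf {m : ℕ | ∃ d : Fin k → ℕ, (∀ i, 0 < d i) ∧ ∏ i, d i = n ∧ Finset.univ.lcm d = m}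

/-- `M_k(X, H; y)`: the number of tuples `(x, t₁,…,t_k)` with `1 ≤ x ≤ X`,
`1 ≤ t_i ≤ H` and `y ∣ (x+t₁)⋯(x+t_k)`. -/
noncomputable def MkCount (k X H y : ℕ) : ℕ :=
  Nat.card {t : ℕ × (Fin k → ℕ) //
    t.1 ∈ Finset.Icc 1 X ∧ (∀ i, t.2 i ∈ Finset.Icc 1 H) ∧ y ∣ ∏ i, (t.1 + t.2 i)}

open Finset

theorem exists_prod_eq_of_dvd_prod {α : Type*} [CommMonoid α] [DecompositionMonoid α]
    [Subsingleton αˣ] {k : ℕ} {v : Fin k → α} {y : α} (h : y ∣ ∏ i, v i) :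
    ∃ d : Fin k → α, (∀ i, d i ∣ v i) ∧ ∏ i, d i = y := by
  induction k generalizing y with
  | zero =>
    rw [univ_eq_empty, prod_empty] at h
    exact ⟨1, nofun, by simpa using ((isUnit_of_dvd_one h).eq_one).symm⟩
  | succ k ih =>
    rw [Fin.prod_univ_succ] at h
    obtain ⟨a, b, ha, hb, rfl⟩ := exists_dvd_and_dvd_of_dvd_mul h
    obtain ⟨d, hd, rfl⟩ := ih hb
    exact ⟨Fin.cons a d, Fin.cases ha hd, by rw [Fin.prod_univ_succ, Fin.cons_zero]; rfl⟩

theorem Nat.ModEq.finset_lcm {ι : Type*} {s : Finset ι} {f : ι → ℕ} {a b : ℕ}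
    (h : ∀ i ∈ s, a ≡ b [MOD f i]) : a ≡ b [MOD s.lcm f] := by
  simp only [Nat.modEq_iff_dvd, Int.natCast_dvd] at h ⊢
  exact Finset.lcm_dvd h

theorem Finset.card_le_div_add_one_of_modEq {S : Finset ℕ} {X L : ℕ} (hS : ∀ x ∈ S, x ≤ X)
    (hmod : ∀ x ∈ S, ∀ x' ∈ S, x ≡ x' [MOD L]) : #S ≤ X / L + 1 := by
  calc #S ≤ #(range (X / L + 1)) := by
        refine card_le_card_of_injOn (· / L) (fun x hx => ?_) (fun x hx x' hx' hxx' => ?_)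
        · simpa [Nat.lt_succ_iff] using Nat.div_le_div_right (hS x hx)
        · rw [← Nat.div_add_mod x L, ← Nat.div_add_mod x' L]
          rw [show x / L = x' / L from hxx', hmod x hx x' hx']
    _ = X / L + 1 := card_range _

def kFactorizations (k n : ℕ) : Finset (Fin k → ℕ) :=
  {d ∈ Fintype.piFinset fun _ => Icc 1 n | ∏ i, d i = n}

section kFactorizations

variable {k n : ℕ} {d : Fin k → ℕ}

theorem mem_kFactorizations : d ∈ kFactorizations k n ↔ (∀ i, 0 < d i) ∧ ∏ i, d i = n := by
  simp only [kFactorizations, mem_filter, Fintype.mem_piFinset, mem_Icc]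
  refine ⟨fun h => ⟨fun i => (h.1 i).1, h.2⟩, fun ⟨hpos, hprod⟩ => ⟨fun i => ⟨hpos i, ?_⟩, hprod⟩⟩
  exact hprod ▸ single_le_prod' (fun j _ => hpos j) (mem_univ i)

theorem card_kFactorizations : #(kFactorizations k n) = tauNat k n := by
  rw [tauNat, ← Nat.card_eq_finsetCard]
  exact Nat.card_congr (Equiv.subtypeEquivRight fun _ => mem_kFactorizations)

theorem lcm_pos_of_mem_kFactorizations (hd : d ∈ kFactorizations k n) : 0 < univ.lcm d := by
  refine Nat.pos_of_ne_zero fun h => ?_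
  obtain ⟨i, -, hi⟩ := Finset.lcm_eq_zero_iff.1 h
  exact (mem_kFactorizations.1 hd).1 i |>.ne' hi

theorem radk_le_lcm (hd : d ∈ kFactorizations k n) : radk k n ≤ univ.lcm d :=
  Nat.sInf_le ⟨d, (mem_kFactorizations.1 hd).1, (mem_kFactorizations.1 hd).2, rfl⟩

theorem radk_pos (hd : d ∈ kFactorizations k n) : 0 < radk k n := by
  have hne : {m | ∃ d : Fin k → ℕ, (∀ i, 0 < d i) ∧ ∏ i, d i = n ∧ univ.lcm d = m}.Nonempty :=
    ⟨_, d, (mem_kFactorizations.1 hd).1, (mem_kFactorizations.1 hd).2, rfl⟩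
  obtain ⟨d', hpos, hprod, hlcm⟩ := Nat.sInf_mem hne
  rw [radk, ← hlcm]
  exact lcm_pos_of_mem_kFactorizations (mem_kFactorizations.2 ⟨hpos, hprod⟩)

end kFactorizations

theorem card_filter_forall_dvd_add_le {k n : ℕ} (t : Fin k → ℕ) {d : Fin k → ℕ}
    (hd : d ∈ kFactorizations k n) (X : ℕ) :
    (#{x ∈ Icc 1 X | ∀ i, d i ∣ x + t i} : ℝ) ≤ 1 + X / radk k n := by
  have hcard : #{x ∈ Icc 1 X | ∀ i, d i ∣ x + t i} ≤ X / univ.lcm d + 1 := by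
    refine Finset.card_le_div_add_one_of_modEq (fun x hx => (mem_Icc.1 (mem_filter.1 hx).1).2)
      fun x hx x' hx' => Nat.ModEq.finset_lcm fun i _ => ?_
    have hxi := Nat.modEq_zero_iff_dvd.2 ((mem_filter.1 hx).2 i)
    have hx'i := Nat.modEq_zero_iff_dvd.2 ((mem_filter.1 hx').2 i)
    exact (hxi.trans hx'i.symm).add_right_cancel' (t i)
  have hrad : (radk k n : ℝ) ≤ univ.lcm d := by exact_mod_cast radk_le_lcm hd
  have hrad_pos : (0 : ℝ) < radk k n := by exact_mod_cast radk_pos hd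
  calc (#{x ∈ Icc 1 X | ∀ i, d i ∣ x + t i} : ℝ) ≤ ((X / univ.lcm d : ℕ) : ℝ) + 1 := by
        exact_mod_cast hcard
    _ ≤ X / univ.lcm d + 1 := by gcongr; exact Nat.cast_div_le
    _ ≤ 1 + X / radk k n := by rw [add_comm]; gcongr

theorem card_filter_dvd_prod_add_le {k : ℕ} (t : Fin k → ℕ) (y X : ℕ) :
    (#{x ∈ Icc 1 X | y ∣ ∏ i, (x + t i)} : ℝ) ≤ tauNat k y * (1 + X / radk k y) := by
  have hsub : {x ∈ Icc 1 X | y ∣ ∏ i, (x + t i)} ⊆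
      (kFactorizations k y).biUnion fun d => {x ∈ Icc 1 X | ∀ i, d i ∣ x + t i} := by
    intro x hx
    obtain ⟨hxX, hdvd⟩ := mem_filter.1 hx
    obtain ⟨d, hd, hprod⟩ := exists_prod_eq_of_dvd_prod hdvd
    have hpos : ∀ i, 0 < d i := fun i =>
      Nat.pos_of_dvd_of_pos (hd i) (by have := (mem_Icc.1 hxX).1; omega)
    exact mem_biUnion.2 ⟨d, mem_kFactorizations.2 ⟨hpos, hprod⟩, mem_filter.2 ⟨hxX, hd⟩⟩
  calc (#{x ∈ Icc 1 X | y ∣ ∏ i, (x + t i)} : ℝ)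
      ≤ ∑ d ∈ kFactorizations k y, (#{x ∈ Icc 1 X | ∀ i, d i ∣ x + t i} : ℝ) := by
        exact_mod_cast (card_le_card hsub).trans card_biUnion_le
    _ ≤ ∑ _d ∈ kFactorizations k y, (1 + X / radk k y : ℝ) :=
        sum_le_sum fun _ hd => card_filter_forall_dvd_add_le t hd X
    _ = tauNat k y * (1 + X / radk k y) := by
        rw [sum_const, nsmul_eq_mul, card_kFactorizations]

theorem mkCount_le_sum (k X H y : ℕ) :
    MkCount k X H y ≤
      ∑ t ∈ Fintype.piFinset fun _ : Fin k => Icc 1 H, #{x ∈ Icc 1 X | y ∣ ∏ i, (x + t i)} := by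
  set U := (Fintype.piFinset fun _ : Fin k => Icc 1 H).biUnion fun t =>
    ({x ∈ Icc 1 X | y ∣ ∏ i, (x + t i)}).image (·, t)
  calc MkCount k X H y ≤ #U := by
        rw [MkCount, ← Nat.card_eq_finsetCard]
        refine Nat.card_mono U.finite_toSet fun p ⟨hx, ht, hdvd⟩ => ?_
        exact mem_biUnion.2 ⟨p.2, Fintype.mem_piFinset.2 ht,
          mem_image.2 ⟨p.1, mem_filter.2 ⟨hx, hdvd⟩, rfl⟩⟩
    _ ≤ _ := card_biUnion_le.trans (sum_le_sum fun _ _ => card_image_le)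

theorem stmt13_general (k y X H : ℕ) :
    (MkCount k X H y : ℝ) ≤
      (H : ℝ) ^ k * (tauNat k y : ℝ) * (1 + (X : ℝ) / (radk k y : ℝ)) := by
  calc (MkCount k X H y : ℝ)
      ≤ ∑ t ∈ Fintype.piFinset fun _ : Fin k => Icc 1 H,
          (#{x ∈ Icc 1 X | y ∣ ∏ i, (x + t i)} : ℝ) := by
        exact_mod_cast mkCount_le_sum k X H y
    _ ≤ ∑ _t ∈ Fintype.piFinset fun _ : Fin k => Icc 1 H, tauNat k y * (1 + X / radk k y : ℝ) :=
        sum_le_sum fun t _ => card_filter_dvd_prod_add_le t y X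
    _ = (H : ℝ) ^ k * tauNat k y * (1 + X / radk k y) := by
        rw [sum_const, nsmul_eq_mul, Fintype.card_piFinset]
        simp [mul_assoc]

/-- for all integers `k, y, X, H ≥ 1`,
`#M_k(X, H; y) ≤ H^k · τ_k(y) · (1 + X / rad_k(y))`. -/
theorem stmt13 (k y X H : ℕ) (hk : 1 ≤ k) (hy : 1 ≤ y) (hX : 1 ≤ X) (hH : 1 ≤ H) :
    (MkCount k X H y : ℝ) ≤
      (H : ℝ) ^ k * (tauNat k y : ℝ) * (1 + (X : ℝ) / (radk k y : ℝ)) :=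
  stmt13_general k y X H
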